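/- Let A be a finite idempotent algebra and f a binary term operation of A satisfying f(x, f(x,y)) = f(x,y) for all x,y ∈ A. Let a,b ∈ A with f(a,b) ≠ a, and define b_0 = f(a,b) and b_{i+1} = f(a, f(b_i, a)) for i ≥ 0. Then f(a, b_i) = b_i for every i, and there exists an index k and a binary term operation s of A such that s(a, b_k) = s(b_k, a) = b_k. -/

import Mathlib

/-!
The law `f x (f x y) = f x y` makes every `b_{i+1} = f a (f b_i a)` a fixed point of `f a`.
With `g x y := f x (f y x)` the sequence is the orbit of `b_0` under `g a`, so by finiteness
`b_k = (g a)^[p] b_k` for some `k` and `p > 0`. Then `s x y := (g x)^[p] y` works: it sends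
`(a, b_k)` to `b_k` by periodicity, and `(b_k, a)` to `b_k` because
`g b_k a = f b_k (f a b_k) = f b_k b_k = b_k` and `g b_k b_k = b_k` by idempotency.
-/

namespace UA

/-- Terms over a signature `(ι, ar)` with `n` variables. -/
inductive Term (ι : Type) (ar : ι → ℕ) (n : ℕ) : Type where
  | var : Fin n → Term ι ar n
  | app : (i : ι) → (Fin (ar i) → Term ι ar n) → Term ι ar n

/-- Evaluation of a term in an algebra with operations `ops`. -/
def Term.eval {ι : Type} {ar : ι → ℕ} {A : Type} (ops : ∀ i : ι, (Fin (ar i) → A) → A)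
    {n : ℕ} : Term ι ar n → (Fin n → A) → A
  | .var j, x => x j
  | .app i ts, x => ops i fun k => Term.eval ops (ts k) x

variable {ι : Type} {ar : ι → ℕ} {A : Type}

/-- An algebra is idempotent if every basic operation is. -/
def Idempotent (ops : ∀ i : ι, (Fin (ar i) → A) → A) : Prop :=
  ∀ (i : ι) (x : A), ops i (fun _ => x) = x

/-- A subuniverse: a subset closed under all basic operations. -/
def IsSubuniverse (ops : ∀ i : ι, (Fin (ar i) → A) → A) (S : Set A) : Prop :=
  ∀ (i : ι) (xs : Fin (ar i) → A), (∀ k, xs k ∈ S) → ops i xs ∈ S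

/-- The subuniverse generated by `X`. -/
def Sg (ops : ∀ i : ι, (Fin (ar i) → A) → A) (X : Set A) : Set A :=
  ⋂₀ {S | IsSubuniverse ops S ∧ X ⊆ S}

/-- A tolerance: a reflexive symmetric compatible binary relation. -/
def IsTolerance (ops : ∀ i : ι, (Fin (ar i) → A) → A) (τ : A → A → Prop) : Prop :=
  (∀ x, τ x x) ∧ (∀ x y, τ x y → τ y x) ∧
  ∀ (i : ι) (xs ys : Fin (ar i) → A), (∀ k, τ (xs k) (ys k)) → τ (ops i xs) (ops i ys)

/-- A congruence: a compatible equivalence relation. -/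
def IsCongruence (ops : ∀ i : ι, (Fin (ar i) → A) → A) (θ : A → A → Prop) : Prop :=
  Equivalence θ ∧
  ∀ (i : ι) (xs ys : Fin (ar i) → A), (∀ k, θ (xs k) (ys k)) → θ (ops i xs) (ops i ys)

/-- A congruence of the subalgebra with universe `B`, viewed as a partial
equivalence relation on the big algebra whose domain is exactly `B` and which is
compatible with all operations. -/
def IsCongruenceOn (ops : ∀ i : ι, (Fin (ar i) → A) → A) (B : Set A)
    (θ : A → A → Prop) : Prop :=
  (∀ x y, θ x y → x ∈ B ∧ y ∈ B) ∧
  (∀ x ∈ B, θ x x) ∧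
  (∀ x y, θ x y → θ y x) ∧
  (∀ x y z, θ x y → θ y z → θ x z) ∧
  ∀ (i : ι) (xs ys : Fin (ar i) → A), (∀ k, θ (xs k) (ys k)) → θ (ops i xs) (ops i ys)

/-- `f` is a binary term operation of the algebra. -/
def IsTermOp2 (ops : ∀ i : ι, (Fin (ar i) → A) → A) (f : A → A → A) : Prop :=
  ∃ t : Term ι ar 2, ∀ x y, f x y = t.eval ops ![x, y]

/-- `g` is a ternary term operation of the algebra. -/
def IsTermOp3 (ops : ∀ i : ι, (Fin (ar i) → A) → A) (g : A → A → A → A) : Prop :=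
  ∃ t : Term ι ar 3, ∀ x y z, g x y z = t.eval ops ![x, y, z]

/-- Connectivity of `a` and `b` in the hypergraph `H(A)` whose hyperedges are the
nonempty proper subuniverses: a chain of hyperedges with consecutive ones
intersecting, the first containing `a`, the last containing `b`. -/
def HConnected (ops : ∀ i : ι, (Fin (ar i) → A) → A) (a b : A) : Prop :=
  ∃ L : List (Set A),
    (∀ S ∈ L, IsSubuniverse ops S ∧ S.Nonempty ∧ S ≠ Set.univ) ∧
    L.Chain' (fun S T => (S ∩ T).Nonempty) ∧
    ∃ h : L ≠ [], a ∈ L.head h ∧ b ∈ L.getLast h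

def Term.subst {n m : ℕ} : Term ι ar n → (Fin n → Term ι ar m) → Term ι ar m
  | .var j, σ => σ j
  | .app i ts, σ => .app i fun k => (ts k).subst σ

section TermOperations

variable {ops : ∀ i : ι, (Fin (ar i) → A) → A}

theorem Term.eval_subst {n m : ℕ} (t : Term ι ar n) (σ : Fin n → Term ι ar m) (x : Fin m → A) :
    (t.subst σ).eval ops x = t.eval ops fun j => (σ j).eval ops x := by
  induction t with
  | var j => rfl
  | app i ts ih => simp only [Term.subst, Term.eval, ih]

theorem Term.eval_const (hidem : Idempotent ops) {n : ℕ} (t : Term ι ar n) (x : A) :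
    t.eval ops (fun _ => x) = x := by
  induction t with
  | var j => rfl
  | app i ts ih => simp only [Term.eval, ih, hidem i x]

theorem IsTermOp2.apply_self (hidem : Idempotent ops) {f : A → A → A} (hf : IsTermOp2 ops f)
    (x : A) : f x x = x := by
  obtain ⟨t, ht⟩ := hf
  have hxx : (![x, x] : Fin 2 → A) = fun _ => x := by
    funext j
    fin_cases j <;> rfl
  rw [ht, hxx, Term.eval_const hidem]

theorem isTermOp2_fst : IsTermOp2 ops fun x _ => x :=
  ⟨.var 0, fun _ _ => rfl⟩

theorem isTermOp2_snd : IsTermOp2 ops fun _ y => y :=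
  ⟨.var 1, fun _ _ => rfl⟩

theorem IsTermOp2.comp {f g h : A → A → A} (hf : IsTermOp2 ops f) (hg : IsTermOp2 ops g)
    (hh : IsTermOp2 ops h) : IsTermOp2 ops fun x y => f (g x y) (h x y) := by
  obtain ⟨tf, htf⟩ := hf
  obtain ⟨tg, htg⟩ := hg
  obtain ⟨th, hth⟩ := hh
  refine ⟨tf.subst ![tg, th], fun x y => ?_⟩
  show f (g x y) (h x y) = _
  rw [Term.eval_subst, htf]
  congr 1
  funext j
  fin_cases j <;> simp [htg, hth]

theorem IsTermOp2.iterate {g : A → A → A} (hg : IsTermOp2 ops g) (n : ℕ) :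
    IsTermOp2 ops fun x y => (g x)^[n] y := by
  induction n with
  | zero => exact isTermOp2_snd
  | succ n ih =>
    simp only [Function.iterate_succ_apply']
    exact hg.comp isTermOp2_fst ih

end TermOperations

theorem eq_iterate_of_succ_eq {α : Type*} {u : ℕ → α} {φ : α → α} (hu : ∀ i, u (i + 1) = φ (u i))
    (k n : ℕ) : u (k + n) = φ^[n] (u k) := by
  induction n with
  | zero => rfl
  | succ n ih => rw [← add_assoc, hu, ih, Function.iterate_succ_apply']

theorem stmt_11_general {ι : Type} {ar : ι → ℕ} {A : Type} [Fintype A]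
    (ops : ∀ i : ι, (Fin (ar i) → A) → A)
    (hidem : Idempotent ops)
    (f : A → A → A) (hf : IsTermOp2 ops f)
    (hlaw : ∀ x y : A, f x (f x y) = f x y)
    (a b : A)
    (bs : ℕ → A)
    (hbs0 : bs 0 = f a b)
    (hbsS : ∀ i : ℕ, bs (i + 1) = f a (f (bs i) a)) :
    (∀ i : ℕ, f a (bs i) = bs i) ∧
    ∃ (k : ℕ) (s : A → A → A), IsTermOp2 ops s ∧
      s a (bs k) = bs k ∧ s (bs k) a = bs k := by
  have hfix : ∀ i, f a (bs i) = bs i := by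
    rintro (_ | i)
    · rw [hbs0, hlaw]
    · rw [hbsS, hlaw]
  refine ⟨hfix, ?_⟩
  set g : A → A → A := fun x y => f x (f y x)
  have hg : IsTermOp2 ops g := hf.comp isTermOp2_fst (hf.comp isTermOp2_snd isTermOp2_fst)
  obtain ⟨k, n, hkn, hper⟩ :=
    Set.finite_univ.exists_lt_map_eq_of_forall_mem (f := bs) fun _ => Set.mem_univ _
  obtain ⟨p, rfl⟩ := Nat.exists_eq_add_of_lt hkn
  refine ⟨k, fun x y => (g x)^[p + 1] y, hg.iterate (p + 1), ?_, ?_⟩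
  · show (g a)^[p + 1] (bs k) = bs k
    rw [← eq_iterate_of_succ_eq (φ := g a) hbsS, ← add_assoc, ← hper]
  · have hstep : g (bs k) a = bs k := by
      simp only [g, hfix, hf.apply_self hidem]
    show (g (bs k))^[p + 1] a = bs k
    rw [Function.iterate_succ_apply, hstep]
    exact Function.iterate_fixed (hg.apply_self hidem (bs k)) p

/-- the sequence `b_0 = f(a,b)`, `b_{i+1} = f(a, f(b_i, a))`
satisfies `f(a, b_i) = b_i`, and some `b_k` is a semilattice image of `a`:
there is a binary term operation `s` with `s(a,b_k) = s(b_k,a) = b_k`. -/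
theorem stmt_11 {ι : Type} {ar : ι → ℕ} {A : Type} [Fintype A] [Nonempty A]
    (ops : ∀ i : ι, (Fin (ar i) → A) → A)
    (hidem : Idempotent ops)
    (f : A → A → A) (hf : IsTermOp2 ops f)
    (hlaw : ∀ x y : A, f x (f x y) = f x y)
    (a b : A) (hne : f a b ≠ a)
    (bs : ℕ → A)
    (hbs0 : bs 0 = f a b)
    (hbsS : ∀ i : ℕ, bs (i + 1) = f a (f (bs i) a)) :
    (∀ i : ℕ, f a (bs i) = bs i) ∧
    ∃ (k : ℕ) (s : A → A → A), IsTermOp2 ops s ∧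
      s a (bs k) = bs k ∧ s (bs k) a = bs k :=
  stmt_11_general ops hidem f hf hlaw a b bs hbs0 hbsS

end UA
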